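/- Let c : ℝ → ℝ be continuously differentiable with 0 < c_* ≤ c(θ) ≤ c^* and c'(θ) ≥ 0 for all θ, let T > 0, and let u : ℝ × ℝ → ℝ be twice continuously differentiable solving u_tt = c(u)² u_xx on [0,T] × ℝ. Set S₀(z) := u_t(0,z) − c(u(0,z)) u_x(0,z) and suppose N := sup_{z ∈ ℝ} max(S₀(z), 0) is finite. Let (t,x₀) ∈ (0,T] × ℝ and suppose there exists a differentiable curve x₊ : [0,t] → ℝ with x₊'(τ) = +c(u(τ, x₊(τ))) for all τ and x₊(t) = x₀. Then S(t,x₀) ≤ √(c^*/c_*) · N, where S := u_t − c(u)u_x. -/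

import Mathlib

/-- Partial derivative in the first (time) variable. -/
noncomputable def pdt (u : ℝ × ℝ → ℝ) : ℝ × ℝ → ℝ :=
  fun p => deriv (fun s => u (s, p.2)) p.1

/-- Partial derivative in the second (space) variable. -/
noncomputable def pdx (u : ℝ × ℝ → ℝ) : ℝ × ℝ → ℝ :=
  fun p => deriv (fun y => u (p.1, y)) p.2

/-- The Riemann variable `R = u_t + c(u) u_x`. -/
noncomputable def Rv (c : ℝ → ℝ) (u : ℝ × ℝ → ℝ) : ℝ × ℝ → ℝ :=
  fun p => pdt u p + c (u p) * pdx u p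

/-- The Riemann variable `S = u_t - c(u) u_x`. -/
noncomputable def Sv (c : ℝ → ℝ) (u : ℝ × ℝ → ℝ) : ℝ × ℝ → ℝ :=
  fun p => pdt u p - c (u p) * pdx u p
/-! Along a plus-characteristic `x' = c(u)`, the wave equation turns the transport of `S` into
`d/dτ S = -c'(u) R u_x`. Since `S + 2 c(u) u_x = R`, the weighted quantity `S / √c(u)` then
satisfies `d/dτ (S / √c(u)) = -c'(u) R² / (2 c(u)^{3/2}) ≤ 0`. So `S / √c(u)` can only
decrease from the foot of the characteristic, where it is at most `N / √c_*`, and multiplying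
back by `√c(u) ≤ √c^*` gives the bound. -/

open Set

lemma pdt_eq_fderiv {f : ℝ × ℝ → ℝ} {p : ℝ × ℝ} (hf : DifferentiableAt ℝ f p) :
    pdt f p = fderiv ℝ f p (1, 0) :=
  (hf.hasFDerivAt.comp_hasDerivAt p.1
    ((hasDerivAt_id p.1).prodMk (hasDerivAt_const p.1 p.2))).deriv

lemma pdx_eq_fderiv {f : ℝ × ℝ → ℝ} {p : ℝ × ℝ} (hf : DifferentiableAt ℝ f p) :
    pdx f p = fderiv ℝ f p (0, 1) :=
  (hf.hasFDerivAt.comp_hasDerivAt p.2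
    ((hasDerivAt_const p.2 p.1).prodMk (hasDerivAt_id p.2))).deriv

lemma hasDerivAt_comp_graph {f : ℝ × ℝ → ℝ} {x : ℝ → ℝ} {v τ : ℝ}
    (hf : DifferentiableAt ℝ f (τ, x τ)) (hx : HasDerivAt x v τ) :
    HasDerivAt (fun σ => f (σ, x σ)) (pdt f (τ, x τ) + v * pdx f (τ, x τ)) τ := by
  have h := hf.hasFDerivAt.comp_hasDerivAt τ ((hasDerivAt_id τ).prodMk hx)
  rwa [show ((1 : ℝ), v) = ((1 : ℝ), (0 : ℝ)) + v • ((0 : ℝ), (1 : ℝ)) by simp, map_add,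
    map_smul, smul_eq_mul, ← pdt_eq_fderiv hf, ← pdx_eq_fderiv hf] at h

section SecondDerivatives

variable {u : ℝ × ℝ → ℝ}

lemma hasFDerivAt_fderiv_apply (hu : ContDiff ℝ 2 u) (v p : ℝ × ℝ) :
    HasFDerivAt (fun q => fderiv ℝ u q v) ((fderiv ℝ (fderiv ℝ u) p).flip v) p :=
  ((ContinuousLinearMap.apply ℝ ℝ v).hasFDerivAt.comp p
    ((hu.fderiv_right (by norm_num)).differentiable one_ne_zero p).hasFDerivAt)

lemma hasFDerivAt_pdt (hu : ContDiff ℝ 2 u) (p : ℝ × ℝ) :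
    HasFDerivAt (pdt u) ((fderiv ℝ (fderiv ℝ u) p).flip (1, 0)) p := by
  convert hasFDerivAt_fderiv_apply hu (1, 0) p using 1
  exact funext fun q => pdt_eq_fderiv ((hu.differentiable (by norm_num)) q)

lemma hasFDerivAt_pdx (hu : ContDiff ℝ 2 u) (p : ℝ × ℝ) :
    HasFDerivAt (pdx u) ((fderiv ℝ (fderiv ℝ u) p).flip (0, 1)) p := by
  convert hasFDerivAt_fderiv_apply hu (0, 1) p using 1
  exact funext fun q => pdx_eq_fderiv ((hu.differentiable (by norm_num)) q)

lemma pdx_pdt_eq_pdt_pdx (hu : ContDiff ℝ 2 u) (p : ℝ × ℝ) :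
    pdx (pdt u) p = pdt (pdx u) p := by
  rw [pdx_eq_fderiv (hasFDerivAt_pdt hu p).differentiableAt, (hasFDerivAt_pdt hu p).fderiv,
    pdt_eq_fderiv (hasFDerivAt_pdx hu p).differentiableAt, (hasFDerivAt_pdx hu p).fderiv]
  exact hu.contDiffAt.isSymmSndFDerivAt (by simp) _ _

end SecondDerivatives

section Characteristics

variable {c : ℝ → ℝ} {u : ℝ × ℝ → ℝ} {x : ℝ → ℝ} {τ : ℝ}

lemma hasDerivAt_Sv_comp_graph (hc : DifferentiableAt ℝ c (u (τ, x τ))) (hu : ContDiff ℝ 2 u)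
    (hx : HasDerivAt x (c (u (τ, x τ))) τ) :
    HasDerivAt (fun σ => Sv c u (σ, x σ))
      (pdt (pdt u) (τ, x τ) - c (u (τ, x τ)) ^ 2 * pdx (pdx u) (τ, x τ)
        - deriv c (u (τ, x τ)) * Rv c u (τ, x τ) * pdx u (τ, x τ)) τ := by
  have hU := hasDerivAt_comp_graph ((hu.differentiable (by norm_num)) _) hx
  have hC := hc.hasDerivAt.comp τ hU
  have hT := hasDerivAt_comp_graph (hasFDerivAt_pdt hu _).differentiableAt hx
  have hX := hasDerivAt_comp_graph (hasFDerivAt_pdx hu _).differentiableAt hx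
  refine (hT.sub (hC.mul hX)).congr_deriv ?_
  rw [pdx_pdt_eq_pdt_pdx hu, Rv, Function.comp_apply]
  ring

lemma hasDerivAt_Sv_div_sqrt_comp_graph (hc : DifferentiableAt ℝ c (u (τ, x τ)))
    (hcpos : 0 < c (u (τ, x τ))) (hu : ContDiff ℝ 2 u)
    (hwave : pdt (pdt u) (τ, x τ) = c (u (τ, x τ)) ^ 2 * pdx (pdx u) (τ, x τ))
    (hx : HasDerivAt x (c (u (τ, x τ))) τ) :
    HasDerivAt (fun σ => Sv c u (σ, x σ) / √(c (u (σ, x σ))))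
      (-(deriv c (u (τ, x τ)) * Rv c u (τ, x τ) ^ 2) /
        (2 * c (u (τ, x τ)) * √(c (u (τ, x τ))))) τ := by
  have hS := hasDerivAt_Sv_comp_graph hc hu hx
  rw [hwave, sub_self, zero_sub] at hS
  have hC :=
    hc.hasDerivAt.comp τ (hasDerivAt_comp_graph ((hu.differentiable (by norm_num)) _) hx)
  refine (hS.div (hC.sqrt hcpos.ne') (Real.sqrt_pos.2 hcpos).ne').congr_deriv ?_
  have hs := Real.sq_sqrt hcpos.le
  simp only [Function.comp_apply, Sv, Rv]
  field_simp
  rw [hs]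
  ring

theorem antitoneOn_Sv_div_sqrt_of_plus_characteristic {a b : ℝ} (hc : Differentiable ℝ c)
    (hcpos : ∀ θ, 0 < c θ) (hcmono : ∀ θ, 0 ≤ deriv c θ) (hu : ContDiff ℝ 2 u)
    (hwave : ∀ τ ∈ Icc a b,
      pdt (pdt u) (τ, x τ) = c (u (τ, x τ)) ^ 2 * pdx (pdx u) (τ, x τ))
    (hx : ∀ τ ∈ Icc a b, HasDerivAt x (c (u (τ, x τ))) τ) :
    AntitoneOn (fun σ => Sv c u (σ, x σ) / √(c (u (σ, x σ)))) (Icc a b) := by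
  have hderiv := fun τ (hτ : τ ∈ Icc a b) =>
    hasDerivAt_Sv_div_sqrt_comp_graph (hc _) (hcpos _) hu (hwave τ hτ) (hx τ hτ)
  refine antitoneOn_of_hasDerivWithinAt_nonpos (convex_Icc a b)
    (f' := fun τ => -(deriv c (u (τ, x τ)) * Rv c u (τ, x τ) ^ 2) /
      (2 * c (u (τ, x τ)) * √(c (u (τ, x τ)))))
    (fun τ hτ => (hderiv τ hτ).continuousAt.continuousWithinAt) ?_ ?_
  · rw [interior_Icc]
    exact fun τ hτ => (hderiv τ (Ioo_subset_Icc_self hτ)).hasDerivWithinAt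
  · intro τ _
    have hcτ := hcpos (u (τ, x τ))
    exact div_nonpos_of_nonpos_of_nonneg (neg_nonpos.2 (mul_nonneg (hcmono _) (sq_nonneg _)))
      (by positivity)

end Characteristics

theorem stmt7_general (c : ℝ → ℝ) (u : ℝ × ℝ → ℝ) (clow chigh T t x₀ : ℝ) (xp : ℝ → ℝ)
    (hc : ContDiff ℝ 1 c)
    (hclow : 0 < clow)
    (hcbd : ∀ θ, clow ≤ c θ ∧ c θ ≤ chigh)
    (hcmono : ∀ θ, 0 ≤ deriv c θ)
    (hu : ContDiff ℝ 2 u)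
    (hwave : ∀ p : ℝ × ℝ, p.1 ∈ Set.Icc 0 T →
      pdt (pdt u) p = (c (u p)) ^ 2 * pdx (pdx u) p)
    (hN : BddAbove (Set.range fun z : ℝ => max (Sv c u (0, z)) 0))
    (ht : t ∈ Set.Ioc 0 T)
    (hxp : ∀ τ ∈ Set.Icc 0 t, HasDerivAt xp (c (u (τ, xp τ))) τ)
    (hxpt : xp t = x₀) :
    Sv c u (t, x₀) ≤ Real.sqrt (chigh / clow) * (⨆ z : ℝ, max (Sv c u (0, z)) 0) := by
  set N := ⨆ z : ℝ, max (Sv c u (0, z)) 0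
  have hN0 : 0 ≤ N := (le_max_right _ _).trans (le_ciSup hN 0)
  have hcpos : ∀ θ, 0 < c θ := fun θ => hclow.trans_le (hcbd θ).1
  have hdecay : Sv c u (t, x₀) / √(c (u (t, x₀))) ≤ N / √clow := by
    have hmono := antitoneOn_Sv_div_sqrt_of_plus_characteristic (hc.differentiable one_ne_zero)
      hcpos hcmono hu (fun τ hτ => hwave _ ⟨hτ.1, hτ.2.trans ht.2⟩) hxp
      (left_mem_Icc.2 ht.1.le) (right_mem_Icc.2 ht.1.le) ht.1.le
    dsimp only at hmono
    rw [hxpt] at hmono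
    exact hmono.trans (div_le_div₀ hN0 ((le_max_left _ _).trans (le_ciSup hN (xp 0)))
      (Real.sqrt_pos.2 hclow) (Real.sqrt_le_sqrt (hcbd _).1))
  calc Sv c u (t, x₀) = Sv c u (t, x₀) / √(c (u (t, x₀))) * √(c (u (t, x₀))) :=
        (div_mul_cancel₀ _ (Real.sqrt_pos.2 (hcpos _)).ne').symm
    _ ≤ N / √clow * √chigh :=
        mul_le_mul hdecay (Real.sqrt_le_sqrt (hcbd _).2) (Real.sqrt_nonneg _) (by positivity)
    _ = √(chigh / clow) * N := by
        rw [Real.sqrt_div' _ hclow.le]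
        ring

theorem stmt7 (c : ℝ → ℝ) (u : ℝ × ℝ → ℝ) (clow chigh T t x₀ : ℝ) (xp : ℝ → ℝ)
    (hc : ContDiff ℝ 1 c)
    (hclow : 0 < clow)
    (hcbd : ∀ θ, clow ≤ c θ ∧ c θ ≤ chigh)
    (hcmono : ∀ θ, 0 ≤ deriv c θ)
    (hT : 0 < T)
    (hu : ContDiff ℝ 2 u)
    (hwave : ∀ p : ℝ × ℝ, p.1 ∈ Set.Icc 0 T →
      pdt (pdt u) p = (c (u p)) ^ 2 * pdx (pdx u) p)
    (hN : BddAbove (Set.range fun z : ℝ => max (Sv c u (0, z)) 0))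
    (ht : t ∈ Set.Ioc 0 T)
    (hxp : ∀ τ ∈ Set.Icc 0 t, HasDerivAt xp (c (u (τ, xp τ))) τ)
    (hxpt : xp t = x₀) :
    Sv c u (t, x₀) ≤ Real.sqrt (chigh / clow) * (⨆ z : ℝ, max (Sv c u (0, z)) 0) :=
  stmt7_general c u clow chigh T t x₀ xp hc hclow hcbd hcmono hu hwave hN ht hxp hxpt
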